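/- arXiv:2310.18957 — 7 statements merged into one kernel-verified Lean document; each statement's English description precedes it below -/
import Mathlib

section
/- If (f_n) and (g_n) are sequences in H satisfying ⟨f,g⟩ = ∑_n ⟨f,f_n⟩⟨g_n,g⟩ for all f,g ∈ H (a weakly dual pair), and (λ_n g_n) is a Bessel sequence with bound A⁻¹ for positive weights λ_n, then (λ_n⁻¹ f_n) satisfies the lower frame inequality A‖f‖² ≤ ∑_n |⟨f, λ_n⁻¹ f_n⟩|² for all f ∈ H. -/
/-!
Testing weak duality on the diagonal, with the weights moved from one sequence to the other,
gives `‖f‖² = |∑ₙ ⟨f, λₙ⁻¹ fₙ⟩⟨λₙ gₙ, f⟩|`. By Cauchy–Schwarz its square is at most the product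
of the two Bessel sums, and the Bessel bound `A⁻¹‖f‖²` on the second one leaves `A‖f‖²` as a
lower bound for the first.
-/

open scoped ENNReal NNReal

/-- The Bessel-type sum `∑ₙ |⟨f, gₙ⟩|²` valued in `ℝ≥0∞`. -/
noncomputable def bSum {H : Type*} [NormedAddCommGroup H] [InnerProductSpace ℂ H]
    (g : ℕ → H) (f : H) : ℝ≥0∞ :=
  ∑' n, ((‖(inner ℂ f (g n) : ℂ)‖₊ : ℝ≥0∞)) ^ 2

namespace ENNReal

theorem sum_mul_sq_le_sq_mul_sq {ι : Type*} (s : Finset ι) (f g : ι → ℝ≥0∞) :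
    (∑ i ∈ s, f i * g i) ^ 2 ≤ (∑ i ∈ s, f i ^ 2) * ∑ i ∈ s, g i ^ 2 := by
  have h := ENNReal.inner_le_Lp_mul_Lq s f g Real.HolderConjugate.two_two
  simp only [ENNReal.rpow_two] at h
  calc (∑ i ∈ s, f i * g i) ^ 2
      ≤ ((∑ i ∈ s, f i ^ 2) ^ (1 / 2 : ℝ) * (∑ i ∈ s, g i ^ 2) ^ (1 / 2 : ℝ)) ^ 2 := by gcongr
    _ = (∑ i ∈ s, f i ^ 2) * ∑ i ∈ s, g i ^ 2 := by
      rw [mul_pow, ← ENNReal.rpow_two, ← ENNReal.rpow_two, ← ENNReal.rpow_mul,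
        ← ENNReal.rpow_mul]
      norm_num

theorem tsum_mul_sq_le_sq_mul_sq {ι : Type*} (f g : ι → ℝ≥0∞) :
    (∑' i, f i * g i) ^ 2 ≤ (∑' i, f i ^ 2) * ∑' i, g i ^ 2 := by
  rw [ENNReal.tsum_eq_iSup_sum, ENNReal.iSup_pow]
  refine iSup_le fun s => (sum_mul_sq_le_sq_mul_sq s f g).trans ?_
  gcongr <;> exact ENNReal.sum_le_tsum s

theorem mul_le_of_sq_le_mul_of_le_inv_mul {a x S T : ℝ≥0∞} (hx : x ≠ ⊤) (hST : x ^ 2 ≤ S * T)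
    (hT : T ≤ a⁻¹ * x) : a * x ≤ S := by
  rcases eq_or_ne x 0 with rfl | hx0
  · simp
  have hxS : x ≤ S * a⁻¹ := by
    refine (ENNReal.mul_le_mul_iff_left hx0 hx).1 ?_
    calc x * x = x ^ 2 := (sq x).symm
      _ ≤ S * (a⁻¹ * x) := hST.trans (by gcongr)
      _ = S * a⁻¹ * x := (mul_assoc _ _ _).symm
  calc a * x ≤ a * (S * a⁻¹) := by gcongr
    _ = a * a⁻¹ * S := by ring
    _ ≤ S := mul_le_of_le_one_left' (ENNReal.mul_inv_le_one a)

end ENNReal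

section

variable {H : Type*} [NormedAddCommGroup H] [InnerProductSpace ℂ H]

theorem hasSum_inner_inv_smul_mul_inner_smul {F G : ℕ → H}
    (hdual : ∀ f g : H, HasSum (fun n => inner ℂ f (F n) * inner ℂ (G n) g) (inner ℂ f g))
    {c : ℕ → ℝ} (hc : ∀ n, c n ≠ 0) (f g : H) :
    HasSum (fun n => inner ℂ f ((((c n)⁻¹ : ℝ) : ℂ) • F n) * inner ℂ ((c n : ℂ) • G n) g)
      (inner ℂ f g) := by
  convert hdual f g using 2 with n
  rw [inner_smul_right, inner_smul_left, Complex.conj_ofReal, Complex.ofReal_inv]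
  field_simp [Complex.ofReal_ne_zero.2 (hc n)]

theorem norm_sq_sq_le_bSum_mul_bSum {F G : ℕ → H} {f : H}
    (hf : HasSum (fun n => inner ℂ f (F n) * inner ℂ (G n) f) (inner ℂ f f)) :
    ((‖f‖₊ : ℝ≥0∞) ^ 2) ^ 2 ≤ bSum F f * bSum G f := by
  have hnorm : (‖f‖₊ : ℝ≥0∞) ^ 2 ≤ ∑' n, ‖inner ℂ f (F n)‖ₑ * ‖inner ℂ f (G n)‖ₑ :=
    calc (‖f‖₊ : ℝ≥0∞) ^ 2 = ‖inner ℂ f f‖ₑ := by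
          rw [inner_self_eq_norm_sq_to_K, enorm_pow, ← ofReal_norm]
          simp [enorm_eq_nnnorm]
      _ ≤ ∑' n, ‖inner ℂ f (F n) * inner ℂ (G n) f‖ₑ := by
          rw [← hf.tsum_eq]; exact enorm_tsum_le_tsum_enorm
      _ = ∑' n, ‖inner ℂ f (F n)‖ₑ * ‖inner ℂ f (G n)‖ₑ := by
          simp only [enorm_mul, ← inner_conj_symm f (G _), RCLike.enorm_conj]
  calc ((‖f‖₊ : ℝ≥0∞) ^ 2) ^ 2 ≤ (∑' n, ‖inner ℂ f (F n)‖ₑ * ‖inner ℂ f (G n)‖ₑ) ^ 2 := by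
        gcongr
    _ ≤ bSum F f * bSum G f := ENNReal.tsum_mul_sq_le_sq_mul_sq _ _

end

theorem stmt1_general {H : Type*} [NormedAddCommGroup H] [InnerProductSpace ℂ H]
    (F G : ℕ → H)
    (hdual : ∀ f g : H,
      HasSum (fun n => (inner ℂ f (F n) : ℂ) * (inner ℂ (G n) g : ℂ)) (inner ℂ f g : ℂ))
    (lam : ℕ → ℝ) (hlam : ∀ n, 0 < lam n) (A : ℝ) (hA : 0 < A)
    (hBessel : ∀ f : H, bSum (fun n => (lam n : ℂ) • G n) f
      ≤ ENNReal.ofReal A⁻¹ * (‖f‖₊ : ℝ≥0∞) ^ 2) :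
    ∀ f : H, ENNReal.ofReal A * (‖f‖₊ : ℝ≥0∞) ^ 2
      ≤ bSum (fun n => (((lam n)⁻¹ : ℝ) : ℂ) • F n) f := by
  intro f
  have hCS := norm_sq_sq_le_bSum_mul_bSum
    (hasSum_inner_inv_smul_mul_inner_smul hdual (fun n => (hlam n).ne') f f)
  rw [ENNReal.ofReal_inv_of_pos hA] at hBessel
  exact ENNReal.mul_le_of_sq_le_mul_of_le_inv_mul (by simp) hCS (hBessel f)

theorem stmt1 {H : Type*} [NormedAddCommGroup H] [InnerProductSpace ℂ H] [CompleteSpace H]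
    [TopologicalSpace.SeparableSpace H]
    (F G : ℕ → H)
    (hdual : ∀ f g : H,
      HasSum (fun n => (inner ℂ f (F n) : ℂ) * (inner ℂ (G n) g : ℂ)) (inner ℂ f g : ℂ))
    (lam : ℕ → ℝ) (hlam : ∀ n, 0 < lam n) (A : ℝ) (hA : 0 < A)
    (hBessel : ∀ f : H, bSum (fun n => (lam n : ℂ) • G n) f
      ≤ ENNReal.ofReal A⁻¹ * (‖f‖₊ : ℝ≥0∞) ^ 2) :
    ∀ f : H, ENNReal.ofReal A * (‖f‖₊ : ℝ≥0∞) ^ 2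
      ≤ bSum (fun n => (((lam n)⁻¹ : ℝ) : ℂ) • F n) f :=
  stmt1_general F G hdual lam hlam A hA hBessel
end

section
/- If ((f_n),(g_n)) is a weakly dual pair for H, i.e., ⟨f,g⟩ = ∑_n ⟨f,f_n⟩⟨g_n,g⟩ for all f,g ∈ H, then for every A > 0 there exist positive weights (ω_n) such that (ω_n f_n) is a lower semi frame for H with bound A. -/
open scoped ENNReal NNReal

theorem ENNReal.tsum_mul_sq_le {ι : Type*} (a b : ι → ℝ≥0∞) :
    (∑' i, a i * b i) ^ 2 ≤ (∑' i, a i ^ 2) * ∑' i, b i ^ 2 := by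
  rw [ENNReal.tsum_eq_iSup_sum, ENNReal.iSup_pow_of_ne_zero two_ne_zero]
  refine iSup_le fun s => ?_
  have h := ENNReal.inner_le_Lp_mul_Lq s a b Real.HolderConjugate.two_two
  have hsq : ∀ x : ℝ≥0∞, (x ^ (1 / 2 : ℝ)) ^ 2 = x := fun x => by
    rw [← ENNReal.rpow_natCast, ← ENNReal.rpow_mul]; norm_num
  simp only [ENNReal.rpow_two] at h
  calc (∑ i ∈ s, a i * b i) ^ 2 ≤ (∑ i ∈ s, a i ^ 2) * ∑ i ∈ s, b i ^ 2 := by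
        simpa only [mul_pow, hsq] using pow_le_pow_left' h 2
    _ ≤ _ := mul_le_mul' (ENNReal.sum_le_tsum s) (ENNReal.sum_le_tsum s)

theorem Complex.enorm_ofReal (r : ℝ) : ‖(r : ℂ)‖ₑ = ‖r‖ₑ := by
  simp only [enorm, Complex.nnnorm_real]

section WeaklyDual

variable {H : Type*} [NormedAddCommGroup H] [InnerProductSpace ℂ H] {F G : ℕ → H} {f : H}

theorem enorm_sq_le_tsum_of_hasSum_inner
    (hf : HasSum (fun n => inner ℂ f (F n) * inner ℂ (G n) f) (inner ℂ f f)) :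
    ‖f‖ₑ ^ 2 ≤ ∑' n, ‖inner ℂ f (F n)‖ₑ * (‖G n‖ₑ * ‖f‖ₑ) :=
  calc ‖f‖ₑ ^ 2 = ‖inner ℂ f f‖ₑ := by
        rw [inner_self_eq_norm_sq_to_K, enorm_pow]; simp [← ofReal_norm]
    _ ≤ ∑' n, ‖inner ℂ f (F n) * inner ℂ (G n) f‖ₑ := hf.tsum_eq ▸ enorm_tsum_le_tsum_enorm
    _ ≤ _ := ENNReal.tsum_le_tsum fun n => by
        rw [enorm_mul]
        gcongr
        simpa only [← ofReal_norm, ← ENNReal.ofReal_mul (norm_nonneg _)] using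
          ENNReal.ofReal_le_ofReal (norm_inner_le_norm (𝕜 := ℂ) (G n) f)

theorem enorm_sq_le_bSum_smul_mul_tsum
    (hf : HasSum (fun n => inner ℂ f (F n) * inner ℂ (G n) f) (inner ℂ f f))
    {c : ℕ → ℂ} (hc : ∀ n, c n ≠ 0) :
    ‖f‖ₑ ^ 2 ≤ bSum (fun n => c n • F n) f * ∑' n, (‖G n‖ₑ / ‖c n‖ₑ) ^ 2 := by
  rcases eq_or_ne f 0 with rfl | hf0
  · simp
  have hfsq : ‖f‖ₑ ^ 2 ≠ 0 := pow_ne_zero 2 (enorm_ne_zero.2 hf0)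
  have hterm : ∀ n, ‖inner ℂ f (F n)‖ₑ * (‖G n‖ₑ * ‖f‖ₑ)
      = ‖inner ℂ f (c n • F n)‖ₑ * (‖G n‖ₑ / ‖c n‖ₑ * ‖f‖ₑ) := fun n => by
    rw [inner_smul_right, enorm_mul, mul_comm ‖c n‖ₑ, mul_assoc, ← mul_assoc ‖c n‖ₑ,
      ENNReal.mul_div_cancel (enorm_ne_zero.2 (hc n)) enorm_ne_top]
  refine (ENNReal.mul_le_mul_iff_left hfsq (ENNReal.pow_ne_top enorm_ne_top)).1 ?_
  calc ‖f‖ₑ ^ 2 * ‖f‖ₑ ^ 2 = (‖f‖ₑ ^ 2) ^ 2 := (sq _).symm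
    _ ≤ (∑' n, ‖inner ℂ f (c n • F n)‖ₑ * (‖G n‖ₑ / ‖c n‖ₑ * ‖f‖ₑ)) ^ 2 := by
        simpa only [hterm] using pow_le_pow_left' (enorm_sq_le_tsum_of_hasSum_inner hf) 2
    _ ≤ bSum (fun n => c n • F n) f * ∑' n, (‖G n‖ₑ / ‖c n‖ₑ * ‖f‖ₑ) ^ 2 :=
        ENNReal.tsum_mul_sq_le _ _
    _ = _ := by simp only [mul_pow, ENNReal.tsum_mul_right, mul_assoc]

end WeaklyDual

theorem exists_pos_tsum_div_enorm_sq_lt (u : ℕ → ℝ≥0∞) (hu : ∀ n, u n ≠ ⊤) {ε : ℝ≥0∞}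
    (hε : ε ≠ 0) : ∃ ω : ℕ → ℝ, (∀ n, 0 < ω n) ∧ ∑' n, (u n / ‖ω n‖ₑ) ^ 2 < ε := by
  obtain ⟨δ, hδ, hsum⟩ := ENNReal.exists_pos_tsum_mul_lt_of_countable hε (fun n => u n ^ 2)
    fun n => ENNReal.pow_ne_top (hu n)
  refine ⟨fun n => ((NNReal.sqrt (δ n))⁻¹ : ℝ≥0), fun n => by simpa using hδ n, ?_⟩
  convert hsum using 3 with n
  rw [Real.enorm_eq_ofReal NNReal.zero_le_coe, ENNReal.ofReal_coe_nnreal,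
    ENNReal.coe_inv (by simpa using (hδ n).ne'), ENNReal.div_eq_inv_mul, inv_inv, mul_pow,
    mul_comm, ← ENNReal.coe_pow, NNReal.sq_sqrt]

theorem stmt2_general {H : Type*} [NormedAddCommGroup H] [InnerProductSpace ℂ H]
    (F G : ℕ → H)
    (hdual : ∀ f g : H,
      HasSum (fun n => (inner ℂ f (F n) : ℂ) * (inner ℂ (G n) g : ℂ)) (inner ℂ f g : ℂ)) :
    ∀ A : ℝ, 0 < A → ∃ ω : ℕ → ℝ, (∀ n, 0 < ω n) ∧
      ∀ f : H, ENNReal.ofReal A * (‖f‖₊ : ℝ≥0∞) ^ 2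
        ≤ bSum (fun n => ((ω n : ℝ) : ℂ) • F n) f := by
  intro A hA
  obtain ⟨ω, hω, hsum⟩ := exists_pos_tsum_div_enorm_sq_lt (fun n => ‖G n‖ₑ)
    (fun _ => enorm_ne_top) (ENNReal.inv_ne_zero.2 ENNReal.ofReal_ne_top)
  refine ⟨ω, hω, fun f => ?_⟩
  have key := enorm_sq_le_bSum_smul_mul_tsum (hdual f f) (c := fun n => (ω n : ℂ))
    fun n => Complex.ofReal_ne_zero.2 (hω n).ne'
  simp only [Complex.enorm_ofReal] at key
  calc ENNReal.ofReal A * (‖f‖₊ : ℝ≥0∞) ^ 2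
      ≤ ENNReal.ofReal A * (bSum (fun n => ((ω n : ℝ) : ℂ) • F n) f * (ENNReal.ofReal A)⁻¹) := by
        gcongr
        exact key.trans (by gcongr)
    _ = bSum (fun n => ((ω n : ℝ) : ℂ) • F n) f :=
        ENNReal.mul_div_cancel (ENNReal.ofReal_pos.2 hA).ne' ENNReal.ofReal_ne_top

theorem stmt2 {H : Type*} [NormedAddCommGroup H] [InnerProductSpace ℂ H] [CompleteSpace H]
    [TopologicalSpace.SeparableSpace H] (hinf : ¬ FiniteDimensional ℂ H)
    (F G : ℕ → H)
    (hdual : ∀ f g : H,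
      HasSum (fun n => (inner ℂ f (F n) : ℂ) * (inner ℂ (G n) g : ℂ)) (inner ℂ f g : ℂ)) :
    ∀ A : ℝ, 0 < A → ∃ ω : ℕ → ℝ, (∀ n, 0 < ω n) ∧
      ∀ f : H, ENNReal.ofReal A * (‖f‖₊ : ℝ≥0∞) ^ 2
        ≤ bSum (fun n => ((ω n : ℝ) : ℂ) • F n) f :=
  stmt2_general F G hdual
end

section
/- Let (f_n) be a complete sequence in H whose analysis operator C, defined on D(C) = {f : ∑_n |⟨f,f_n⟩|² < ∞} by Cf = (⟨f,f_n⟩), has finite-dimensional domain. Then (f_n) is a lower semi frame for H, i.e., there exists A > 0 with A‖f‖² ≤ ∑_n |⟨f,f_n⟩|² for all f ∈ H. -/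
/-!
On the domain `D` the analysis operator is a linear map into `ℓ²`, and it is injective because a
vector orthogonal to a complete sequence vanishes. An injective linear map on a
finite-dimensional space is bounded below, which gives the lower frame bound on `D`; off `D`
the sum is `∞`.
-/

open scoped ENNReal NNReal

open scoped InnerProductSpace

section lp

variable {ι : Type*} {E : ι → Type*} [∀ i, NormedAddCommGroup (E i)]

theorem memℓp_two_of_tsum_nnnorm_sq_ne_top {a : ∀ i, E i}
    (ha : ∑' i, (‖a i‖₊ : ℝ≥0∞) ^ 2 ≠ ⊤) : Memℓp a 2 := by
  refine memℓp_gen ?_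
  have : Summable fun i => ‖a i‖₊ ^ 2 := by
    rw [← ENNReal.tsum_coe_ne_top_iff_summable]
    simpa only [ENNReal.coe_pow] using ha
  simpa [Real.rpow_two] using NNReal.summable_coe.mpr this

theorem lp.ofReal_norm_sq_eq_tsum (a : lp E 2) :
    ENNReal.ofReal (‖a‖ ^ 2) = ∑' i, (‖a i‖₊ : ℝ≥0∞) ^ 2 := by
  have hsum : Summable fun i => ‖a i‖ ^ 2 := by
    simpa [Real.rpow_two] using (memℓp_gen_iff (p := 2) (by norm_num)).1 (lp.memℓp a)
  have hnorm : ‖a‖ ^ 2 = ∑' i, ‖a i‖ ^ 2 := by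
    simpa [Real.rpow_two] using lp.norm_rpow_eq_tsum (p := 2) (by norm_num) a
  rw [hnorm, ENNReal.ofReal_tsum_of_nonneg (fun _ => by positivity) hsum]
  simp only [ENNReal.ofReal_pow (norm_nonneg _), ofReal_norm, enorm_eq_nnnorm]

end lp

theorem LinearMap.exists_pos_mul_norm_sq_le {𝕜 E F : Type*} [NontriviallyNormedField 𝕜]
    [CompleteSpace 𝕜] [NormedAddCommGroup E] [NormedSpace 𝕜 E] [FiniteDimensional 𝕜 E]
    [NormedAddCommGroup F] [NormedSpace 𝕜 F] (f : E →ₗ[𝕜] F) (hf : Function.Injective f) :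
    ∃ c : ℝ, 0 < c ∧ ∀ x, c * ‖x‖ ^ 2 ≤ ‖f x‖ ^ 2 := by
  obtain ⟨K, hK0, hK⟩ := f.exists_antilipschitzWith (LinearMap.ker_eq_bot.2 hf)
  refine ⟨((K : ℝ) ^ 2)⁻¹, by positivity, fun x => ?_⟩
  have hx : ‖x‖ ≤ K * ‖f x‖ := by simpa using hK.le_mul_dist x 0
  rw [inv_mul_le_iff₀ (by positivity), ← mul_pow]
  exact pow_le_pow_left₀ (norm_nonneg _) hx 2

theorem eq_zero_of_inner_eq_zero_of_dense_span {𝕜 H ι : Type*} [RCLike 𝕜]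
    [NormedAddCommGroup H] [InnerProductSpace 𝕜 H] {v : ι → H}
    (hv : Dense (Submodule.span 𝕜 (Set.range v) : Set H)) {x : H}
    (hx : ∀ i, ⟪x, v i⟫_𝕜 = 0) : x = 0 := by
  refine hv.eq_zero_of_inner_left 𝕜 fun u hu => ?_
  have hspan : Submodule.span 𝕜 (Set.range v) ≤ LinearMap.ker (innerₛₗ 𝕜 x) :=
    Submodule.span_le.2 <| Set.range_subset_iff.2 hx
  exact hspan hu

section analysisOp

variable {H : Type*} [NormedAddCommGroup H] [InnerProductSpace ℂ H]

theorem bSum_eq_tsum_nnnorm_inner_comm (g : ℕ → H) (f : H) :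
    bSum g f = ∑' n, (‖⟪g n, f⟫_ℂ‖₊ : ℝ≥0∞) ^ 2 :=
  tsum_congr fun n => by
    rw [show ‖⟪f, g n⟫_ℂ‖₊ = ‖⟪g n, f⟫_ℂ‖₊ from NNReal.eq (norm_inner_symm f (g n))]

/-- The analysis operator `C` restricted to a subspace `D` of its domain. Its coordinates are
`⟪g n, x⟫`, the conjugates of `⟨x, gₙ⟩`, so that it is `ℂ`-linear. -/
noncomputable def analysisOp (g : ℕ → H) (D : Submodule ℂ H) (hD : ∀ x ∈ D, bSum g x ≠ ⊤) :
    D →ₗ[ℂ] lp (fun _ : ℕ => ℂ) 2 where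
  toFun x := ⟨fun n => ⟪g n, (x : H)⟫_ℂ,
    memℓp_two_of_tsum_nnnorm_sq_ne_top <|
      (bSum_eq_tsum_nnnorm_inner_comm g x).symm ▸ hD x x.2⟩
  map_add' x y := by ext n; exact inner_add_right _ _ _
  map_smul' c x := by ext n; exact inner_smul_right _ _ _

variable {g : ℕ → H} {D : Submodule ℂ H} {hD : ∀ x ∈ D, bSum g x ≠ ⊤}

theorem bSum_eq_ofReal_norm_analysisOp_sq (x : D) :
    bSum g x = ENNReal.ofReal (‖analysisOp g D hD x‖ ^ 2) := by
  rw [lp.ofReal_norm_sq_eq_tsum]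
  exact bSum_eq_tsum_nnnorm_inner_comm g x

theorem analysisOp_injective (hg : Dense (Submodule.span ℂ (Set.range g) : Set H)) :
    Function.Injective (analysisOp g D hD) := by
  rw [← LinearMap.ker_eq_bot, LinearMap.ker_eq_bot']
  intro x hx
  refine Subtype.ext <| eq_zero_of_inner_eq_zero_of_dense_span hg fun n => ?_
  have : ⟪g n, (x : H)⟫_ℂ = 0 := congrFun (congrArg Subtype.val hx) n
  rw [← inner_conj_symm, this, map_zero]

end analysisOp

theorem stmt3_general {H : Type*} [NormedAddCommGroup H] [InnerProductSpace ℂ H] (F : ℕ → H)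
    (hcomplete : (Submodule.span ℂ (Set.range F)).topologicalClosure = ⊤)
    (D : Submodule ℂ H) (hD : (D : Set H) = {f : H | bSum F f ≠ ⊤})
    (hfin : FiniteDimensional ℂ D) :
    ∃ A : ℝ, 0 < A ∧ ∀ f : H, ENNReal.ofReal A * (‖f‖₊ : ℝ≥0∞) ^ 2 ≤ bSum F f := by
  have hmem (f : H) : f ∈ D ↔ bSum F f ≠ ⊤ := Set.ext_iff.1 hD f
  have hDsub : ∀ x ∈ D, bSum F x ≠ ⊤ := fun x => (hmem x).1
  have hdense := Submodule.dense_iff_topologicalClosure_eq_top.2 hcomplete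
  obtain ⟨A, hA, hlow⟩ :=
    (analysisOp F D hDsub).exists_pos_mul_norm_sq_le (analysisOp_injective hdense)
  refine ⟨A, hA, fun f => ?_⟩
  by_cases hf : bSum F f = ⊤
  · simp [hf]
  have hfD : f ∈ D := (hmem f).2 hf
  calc ENNReal.ofReal A * (‖f‖₊ : ℝ≥0∞) ^ 2
      = ENNReal.ofReal (A * ‖(⟨f, hfD⟩ : D)‖ ^ 2) := by
        rw [ENNReal.ofReal_mul hA.le, ENNReal.ofReal_pow (norm_nonneg _), Submodule.coe_norm,
          ofReal_norm, enorm_eq_nnnorm]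
    _ ≤ ENNReal.ofReal (‖analysisOp F D hDsub ⟨f, hfD⟩‖ ^ 2) :=
        ENNReal.ofReal_le_ofReal (hlow _)
    _ = bSum F f := (bSum_eq_ofReal_norm_analysisOp_sq _).symm

theorem stmt3 {H : Type*} [NormedAddCommGroup H] [InnerProductSpace ℂ H] [CompleteSpace H]
    [TopologicalSpace.SeparableSpace H] (hinf : ¬ FiniteDimensional ℂ H)
    (F : ℕ → H)
    (hcomplete : (Submodule.span ℂ (Set.range F)).topologicalClosure = ⊤)
    (D : Submodule ℂ H) (hD : (D : Set H) = {f : H | bSum F f ≠ ⊤})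
    (hfin : FiniteDimensional ℂ D) :
    ∃ A : ℝ, 0 < A ∧ ∀ f : H, ENNReal.ofReal A * (‖f‖₊ : ℝ≥0∞) ^ 2 ≤ bSum F f :=
  stmt3_general F hcomplete D hD hfin
end

section
/- Let (f_n) be a complete minimal sequence in H whose biorthogonal sequence is not complete in H. Then (f_n) is not a weighted frame for H, i.e., there is no sequence of positive weights (ω_n) such that (ω_n f_n) is a frame for H. -/
open scoped ENNReal NNReal

/-!
Put `eₙ = ωₙ fₙ`. The frame inequalities say that the analysis operator `T x = (⟪eₙ, x⟫)ₙ`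
maps `H` boundedly into `ℓ²` and is bounded below, so `T†T` is invertible and the synthesis
operator `T†` is onto: every `x` is the weak sum `∑ cₙ eₙ` of some `c ∈ ℓ²`. If `x ⊥ gₘ` for
all `m`, pairing with `gₘ` and biorthogonality give `ωₘ cₘ = 0`, so `c = 0` and `x = 0`;
the `gₘ` would be complete.
-/

open scoped lp InnerProductSpace InnerProduct ComplexConjugate

theorem ContinuousLinearMap.surjective_adjoint_of_forall_le_norm_sq {𝕜 E F : Type*} [RCLike 𝕜]
    [NormedAddCommGroup E] [InnerProductSpace 𝕜 E] [CompleteSpace E]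
    [NormedAddCommGroup F] [InnerProductSpace 𝕜 F] [CompleteSpace F]
    (T : E →L[𝕜] F) {c : ℝ≥0} (hc : 0 < c) (h : ∀ x, ‖x‖ ^ 2 * c ≤ ‖T x‖ ^ 2) :
    Function.Surjective (T† : F → E) := by
  have hunit : IsUnit (T† ∘L T) := by
    refine (T† ∘L T).isUnit_of_forall_le_norm_inner_map hc fun x => ?_
    rw [comp_apply, adjoint_inner_left, inner_self_eq_norm_sq_to_K, norm_pow, RCLike.norm_ofReal,
      abs_norm]
    exact h x
  exact Function.Surjective.of_comp (g := T) (isUnit_iff_bijective.1 hunit).2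

theorem ofReal_mul_nnnorm_sq {E : Type*} [SeminormedAddGroup E] {C : ℝ} (hC : 0 ≤ C) (x : E) :
    ENNReal.ofReal C * (‖x‖₊ : ℝ≥0∞) ^ 2 = ENNReal.ofReal (C * ‖x‖ ^ 2) := by
  rw [ENNReal.ofReal_mul hC, ENNReal.ofReal_pow (norm_nonneg _), ofReal_norm, enorm_eq_nnnorm]

section Bessel

variable {H : Type*} [NormedAddCommGroup H] [InnerProductSpace ℂ H] {e : ℕ → H} {x : H}

theorem bSum_eq_tsum_ofReal (e : ℕ → H) (x : H) :
    bSum e x = ∑' n, ENNReal.ofReal (‖⟪e n, x⟫_ℂ‖ ^ 2) := by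
  refine tsum_congr fun n => ?_
  rw [ENNReal.ofReal_pow (norm_nonneg _), norm_inner_symm, ofReal_norm, enorm_eq_nnnorm]

theorem summable_of_bSum_ne_top (h : bSum e x ≠ ∞) : Summable fun n => ‖⟪e n, x⟫_ℂ‖ ^ 2 := by
  rw [bSum_eq_tsum_ofReal] at h
  simpa [ENNReal.toReal_ofReal (sq_nonneg _)] using ENNReal.summable_toReal h

theorem bSum_eq_ofReal_tsum (h : bSum e x ≠ ∞) :
    bSum e x = ENNReal.ofReal (∑' n, ‖⟪e n, x⟫_ℂ‖ ^ 2) := by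
  rw [ENNReal.ofReal_tsum_of_nonneg (fun _ => sq_nonneg _) (summable_of_bSum_ne_top h),
    bSum_eq_tsum_ofReal]

variable (e) in
noncomputable def besselAnalysis (he : ∀ x, bSum e x ≠ ∞) : H →ₗ[ℂ] ℓ²(ℕ, ℂ) where
  toFun x := ⟨fun n => ⟪e n, x⟫_ℂ, memℓp_gen <| by simpa using summable_of_bSum_ne_top (he x)⟩
  map_add' x y := by ext n; exact inner_add_right _ _ _
  map_smul' a x := by ext n; exact inner_smul_right _ _ _

theorem besselAnalysis_apply (he : ∀ x, bSum e x ≠ ∞) (x : H) (n : ℕ) :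
    besselAnalysis e he x n = ⟪e n, x⟫_ℂ := rfl

theorem ofReal_norm_besselAnalysis_sq (he : ∀ x, bSum e x ≠ ∞) (x : H) :
    ENNReal.ofReal (‖besselAnalysis e he x‖ ^ 2) = bSum e x := by
  have h := lp.norm_rpow_eq_tsum (p := 2) (by norm_num) (besselAnalysis e he x)
  simp only [ENNReal.toReal_ofNat, Real.rpow_two, besselAnalysis_apply] at h
  rw [h, bSum_eq_ofReal_tsum (he x)]

theorem exists_expansion_of_frame [CompleteSpace H] {A B : ℝ} (hA : 0 < A) (hB : 0 ≤ B)
    (hframe : ∀ x : H, ENNReal.ofReal A * (‖x‖₊ : ℝ≥0∞) ^ 2 ≤ bSum e x ∧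
      bSum e x ≤ ENNReal.ofReal B * (‖x‖₊ : ℝ≥0∞) ^ 2) (x : H) :
    ∃ c : ℓ²(ℕ, ℂ), ∀ y, ⟪y, x⟫_ℂ = ∑' n, ⟪y, e n⟫_ℂ * c n := by
  have he : ∀ x, bSum e x ≠ ∞ := fun x =>
    ne_top_of_le_ne_top (by rw [ofReal_mul_nnnorm_sq hB]; exact ENNReal.ofReal_ne_top)
      (hframe x).2
  set T := besselAnalysis e he
  have hupper (x : H) : ‖T x‖ ≤ √B * ‖x‖ := by
    have h := (hframe x).2
    rw [← ofReal_norm_besselAnalysis_sq, ofReal_mul_nnnorm_sq hB,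
      ENNReal.ofReal_le_ofReal_iff (by positivity)] at h
    rw [← pow_le_pow_iff_left₀ (norm_nonneg _) (by positivity) two_ne_zero, mul_pow,
      Real.sq_sqrt hB]
    exact h
  have hlower (x : H) : ‖x‖ ^ 2 * A.toNNReal ≤ ‖T x‖ ^ 2 := by
    have h := (hframe x).1
    rw [← ofReal_norm_besselAnalysis_sq, ofReal_mul_nnnorm_sq hA.le,
      ENNReal.ofReal_le_ofReal_iff (by positivity)] at h
    rw [Real.coe_toNNReal _ hA.le, mul_comm]
    exact h
  obtain ⟨c, rfl⟩ := (T.mkContinuous _ hupper).surjective_adjoint_of_forall_le_norm_sq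
    (Real.toNNReal_pos.2 hA) hlower x
  refine ⟨c, fun y => ?_⟩
  rw [ContinuousLinearMap.adjoint_inner_right, lp.inner_eq_tsum]
  refine tsum_congr fun n => ?_
  change c n * conj ⟪e n, y⟫_ℂ = _
  rw [inner_conj_symm, mul_comm]

end Bessel

theorem stmt6_general {H : Type*} [NormedAddCommGroup H] [InnerProductSpace ℂ H] [CompleteSpace H]
    (f : ℕ → H)
    (g : ℕ → H)
    (hbiorth : ∀ n m : ℕ, (inner ℂ (f n) (g m) : ℂ) = if n = m then 1 else 0)
    (hgnotcomplete : (Submodule.span ℂ (Set.range g)).topologicalClosure ≠ ⊤) :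
    ¬ ∃ ω : ℕ → ℝ, (∀ n, 0 < ω n) ∧ ∃ A B : ℝ, 0 < A ∧ 0 < B ∧
      ∀ x : H, ENNReal.ofReal A * (‖x‖₊ : ℝ≥0∞) ^ 2
          ≤ bSum (fun n => ((ω n : ℝ) : ℂ) • f n) x ∧
        bSum (fun n => ((ω n : ℝ) : ℂ) • f n) x ≤ ENNReal.ofReal B * (‖x‖₊ : ℝ≥0∞) ^ 2 := by
  rintro ⟨ω, hω, A, B, hA, hB, hframe⟩
  obtain ⟨x, hxg, hx0⟩ := (Submodule.ne_bot_iff _).1 fun h =>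
    hgnotcomplete (Submodule.topologicalClosure_eq_top_iff.2 h)
  obtain ⟨c, hc⟩ := exists_expansion_of_frame hA hB.le hframe x
  have hcoeff (m : ℕ) : c m = 0 := by
    have h := hc (g m)
    rw [Submodule.inner_right_of_mem_orthogonal
      (Submodule.subset_span (Set.mem_range_self m)) hxg] at h
    have hterm (n : ℕ) : ⟪g m, ((ω n : ℝ) : ℂ) • f n⟫_ℂ * c n =
        if n = m then (ω m : ℂ) * c m else 0 := by
      rw [inner_smul_right, ← inner_conj_symm, hbiorth]
      split_ifs with hnm <;> simp [hnm]
    rw [tsum_congr hterm, tsum_ite_eq] at h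
    exact (mul_eq_zero.1 h.symm).resolve_left (by exact_mod_cast (hω m).ne')
  have hxx : ⟪x, x⟫_ℂ = 0 := by
    rw [hc x]
    simp [hcoeff]
  exact hx0 (inner_self_eq_zero.1 hxx)

theorem stmt6 {H : Type*} [NormedAddCommGroup H] [InnerProductSpace ℂ H] [CompleteSpace H]
    [TopologicalSpace.SeparableSpace H] (hinf : ¬ FiniteDimensional ℂ H)
    (f : ℕ → H)
    (hcomplete : (Submodule.span ℂ (Set.range f)).topologicalClosure = ⊤)
    (hminimal : ∀ j : ℕ, f j ∉ (Submodule.span ℂ (f '' {i : ℕ | i ≠ j})).topologicalClosure)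
    (g : ℕ → H)
    (hbiorth : ∀ n m : ℕ, (inner ℂ (f n) (g m) : ℂ) = if n = m then 1 else 0)
    (hgnotcomplete : (Submodule.span ℂ (Set.range g)).topologicalClosure ≠ ⊤) :
    ¬ ∃ ω : ℕ → ℝ, (∀ n, 0 < ω n) ∧ ∃ A B : ℝ, 0 < A ∧ 0 < B ∧
      ∀ x : H, ENNReal.ofReal A * (‖x‖₊ : ℝ≥0∞) ^ 2
          ≤ bSum (fun n => ((ω n : ℝ) : ℂ) • f n) x ∧
        bSum (fun n => ((ω n : ℝ) : ℂ) • f n) x ≤ ENNReal.ofReal B * (‖x‖₊ : ℝ≥0∞) ^ 2 :=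
  stmt6_general f g hbiorth hgnotcomplete
end

section
/- Let (e_n)_{n≥1} be an orthonormal basis of H and f_n = e_1 + e_n for n ≥ 2. Then (f_n)_{n≥2} is not a weighted frame: there are no positive weights (ω_n)_{n≥2} such that (ω_n f_n)_{n≥2} is a frame for H. -/
/-!
Testing the frame inequalities on `e (k + 1)`, which only sees the `k`-th vector, forces
`A ≤ |ω k|²` for every `k`; testing them on `e 0`, which sees every vector with coefficient
`ω k`, forces `∑ |ω k|² ≤ B`. No positive `A` allows both.
-/

open scoped ENNReal NNReal

theorem ENNReal.tsum_eq_top_of_forall_le {α : Type*} [Infinite α] {f : α → ℝ≥0∞} {c : ℝ≥0∞}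
    (hc : c ≠ 0) (h : ∀ a, c ≤ f a) : ∑' a, f a = ∞ :=
  top_unique <| (ENNReal.tsum_const_eq_top_of_ne_zero (α := α) hc) ▸ ENNReal.tsum_le_tsum h

section Orthonormal

variable {H : Type*} [NormedAddCommGroup H] [InnerProductSpace ℂ H] {e : ℕ → H}

theorem Orthonormal.inner_succ_smul_zero_add_succ (he : Orthonormal ℂ e) (c : ℂ) (k n : ℕ) :
    inner ℂ (e (k + 1)) (c • (e 0 + e (n + 1))) = if n = k then c else 0 := by
  rw [inner_smul_right, inner_add_right, orthonormal_iff_ite.mp he, orthonormal_iff_ite.mp he]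
  by_cases h : n = k
  · simp [h]
  · simp [h, Ne.symm h]

theorem Orthonormal.inner_zero_smul_zero_add_succ (he : Orthonormal ℂ e) (c : ℂ) (n : ℕ) :
    inner ℂ (e 0) (c • (e 0 + e (n + 1))) = c := by
  simp [orthonormal_iff_ite.mp he, he.1 0]

theorem Orthonormal.bSum_succ (he : Orthonormal ℂ e) (c : ℕ → ℂ) (k : ℕ) :
    bSum (fun n => c n • (e 0 + e (n + 1))) (e (k + 1)) = (‖c k‖₊ : ℝ≥0∞) ^ 2 := by
  unfold bSum
  simp_rw [he.inner_succ_smul_zero_add_succ]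
  rw [tsum_eq_single k fun n hn => by simp [hn]]
  simp

theorem Orthonormal.bSum_zero (he : Orthonormal ℂ e) (c : ℕ → ℂ) :
    bSum (fun n => c n • (e 0 + e (n + 1))) (e 0) = ∑' n, (‖c n‖₊ : ℝ≥0∞) ^ 2 := by
  simp only [bSum, he.inner_zero_smul_zero_add_succ]

theorem Orthonormal.enorm_sq_eq_one (he : Orthonormal ℂ e) (i : ℕ) :
    (‖e i‖₊ : ℝ≥0∞) ^ 2 = 1 := by
  simp [show ‖e i‖₊ = 1 from Subtype.ext (he.1 i)]

end Orthonormal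

/-- With the orthonormal basis reindexed over ℕ, `f n = e 0 + e (n+1)`
plays the role of `f_n = e_1 + e_n`, `n ≥ 2`. -/
theorem stmt10_general {H : Type*} [NormedAddCommGroup H] [InnerProductSpace ℂ H]
    (e : ℕ → H) (he : Orthonormal ℂ e)
    (f : ℕ → H) (hf : ∀ n, f n = e 0 + e (n + 1)) :
    ¬ ∃ ω : ℕ → ℝ, (∀ n, 0 < ω n) ∧ ∃ A B : ℝ, 0 < A ∧ 0 < B ∧
      ∀ x : H, ENNReal.ofReal A * (‖x‖₊ : ℝ≥0∞) ^ 2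
          ≤ bSum (fun n => ((ω n : ℝ) : ℂ) • f n) x ∧
        bSum (fun n => ((ω n : ℝ) : ℂ) • f n) x ≤ ENNReal.ofReal B * (‖x‖₊ : ℝ≥0∞) ^ 2 := by
  rintro ⟨ω, -, A, B, hA, -, hframe⟩
  simp only [hf] at hframe
  have hlower (k : ℕ) : ENNReal.ofReal A ≤ (‖(ω k : ℂ)‖₊ : ℝ≥0∞) ^ 2 := by
    have h := (hframe (e (k + 1))).1
    rwa [he.bSum_succ, he.enorm_sq_eq_one, mul_one] at h
  have hupper := (hframe (e 0)).2
  rw [he.bSum_zero, he.enorm_sq_eq_one, mul_one,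
    ENNReal.tsum_eq_top_of_forall_le (ENNReal.ofReal_pos.mpr hA).ne' hlower] at hupper
  exact ENNReal.ofReal_ne_top (top_unique hupper)

/-- with the orthonormal basis reindexed over ℕ, `f n = e 0 + e (n+1)`
plays the role of `f_n = e_1 + e_n`, `n ≥ 2`. -/
theorem stmt10 {H : Type*} [NormedAddCommGroup H] [InnerProductSpace ℂ H] [CompleteSpace H]
    [TopologicalSpace.SeparableSpace H]
    (e : ℕ → H) (he : Orthonormal ℂ e)
    (hecomplete : (Submodule.span ℂ (Set.range e)).topologicalClosure = ⊤)
    (f : ℕ → H) (hf : ∀ n, f n = e 0 + e (n + 1)) :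
    ¬ ∃ ω : ℕ → ℝ, (∀ n, 0 < ω n) ∧ ∃ A B : ℝ, 0 < A ∧ 0 < B ∧
      ∀ x : H, ENNReal.ofReal A * (‖x‖₊ : ℝ≥0∞) ^ 2
          ≤ bSum (fun n => ((ω n : ℝ) : ℂ) • f n) x ∧
        bSum (fun n => ((ω n : ℝ) : ℂ) • f n) x ≤ ENNReal.ofReal B * (‖x‖₊ : ℝ≥0∞) ^ 2 :=
  stmt10_general e he f hf
end

section
/- Conjecture (M2) implies Conjecture (M1): assume that every unconditionally convergent invertible multiplier M_{m,Φ,Ψ} admits scalars (α_n),(β_n) with α_n·conj(β_n) = m_n such that (α_n φ_n) and (β_n ψ_n) are frames for H. Then every unconditionally convergent multiplier M_{m,Φ,Ψ} admits scalars (α_n),(β_n) with α_n·conj(β_n) = m_n such that (α_n φ_n) and (β_n ψ_n) are Bessel sequences. -/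
open scoped ENNReal NNReal

open scoped InnerProductSpace

lemma bSum_comp_le {H : Type*} [NormedAddCommGroup H] [InnerProductSpace ℂ H]
    (g : ℕ → H) (x : H) {ι : ℕ → ℕ} (hι : Function.Injective ι) :
    bSum (fun k => g (ι k)) x ≤ bSum g x :=
  ENNReal.tsum_comp_le_tsum_of_injective hι _

section Interleave

variable {α : Type*}

def interleave (a b : ℕ → α) (n : ℕ) : α :=
  if n % 2 = 0 then a (n / 2) else b (n / 2)

@[simp]
lemma interleave_two_mul (a b : ℕ → α) (k : ℕ) : interleave a b (2 * k) = a k := by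
  simp [interleave]

@[simp]
lemma interleave_two_mul_add_one (a b : ℕ → α) (k : ℕ) :
    interleave a b (2 * k + 1) = b k := by
  simp [interleave, Nat.add_mod, Nat.add_div]

lemma HasSum.interleave {E : Type*} [AddCommMonoid E] [TopologicalSpace E] [ContinuousAdd E]
    {a b : ℕ → E} {x y : E} (ha : HasSum a x) (hb : HasSum b y) :
    HasSum (interleave a b) (x + y) :=
  HasSum.even_add_odd (by simpa using ha) (by simpa using hb)

end Interleave

section Multiplier

variable {𝕜 E : Type*} [RCLike 𝕜] [NormedAddCommGroup E] [InnerProductSpace 𝕜 E]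

def multiplierTerm (m : ℕ → 𝕜) (Φ Ψ : ℕ → E) (f : E) (n : ℕ) : E :=
  (m n * ⟪f, Ψ n⟫_𝕜) • Φ n

lemma multiplierTerm_interleave (m m' : ℕ → 𝕜) (Φ Φ' Ψ Ψ' : ℕ → E) (f : E) :
    multiplierTerm (interleave m m') (interleave Φ Φ') (interleave Ψ Ψ') f =
      interleave (multiplierTerm m Φ Ψ f) (multiplierTerm m' Φ' Ψ' f) := by
  funext n
  unfold multiplierTerm interleave
  split_ifs <;> rfl

lemma multiplierTerm_one (Φ Ψ : ℕ → E) (f : E) :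
    multiplierTerm (1 : ℕ → 𝕜) Φ Ψ f = fun n => ⟪f, Ψ n⟫_𝕜 • Φ n := by
  funext n
  simp [multiplierTerm]

lemma multiplierTerm_neg (m : ℕ → 𝕜) (Φ Ψ : ℕ → E) (f : E) :
    multiplierTerm (-m) Φ Ψ f = -multiplierTerm m Φ Ψ f := by
  funext n
  simp [multiplierTerm, neg_smul]

lemma hasSum_multiplierTerm_interleave_neg {m₀ m : ℕ → 𝕜}
    {Φ₀ Ψ₀ Φ Ψ : ℕ → E} {f y₀ y : E} (h₀ : HasSum (multiplierTerm m₀ Φ₀ Ψ₀ f) y₀)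
    (h : HasSum (multiplierTerm m Φ Ψ f) y) :
    HasSum (multiplierTerm (interleave m₀ (interleave m (-m)))
      (interleave Φ₀ (interleave Φ Φ)) (interleave Ψ₀ (interleave Ψ Ψ)) f) y₀ := by
  rw [multiplierTerm_interleave, multiplierTerm_interleave, multiplierTerm_neg]
  have := h₀.interleave (h.interleave h.neg)
  rwa [add_neg_cancel, add_zero] at this

end Multiplier

section HilbertBasis

variable {𝕜 E : Type*} [RCLike 𝕜] [NormedAddCommGroup E] [InnerProductSpace 𝕜 E]

/-- Orthonormal vectors are at distance `√2`, so in a separable space the balls of radius `1/2`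
around them form a disjoint family of open sets, which must be countable. -/
lemma Orthonormal.countable [TopologicalSpace.SeparableSpace E] {ι : Type*} {v : ι → E}
    (hv : Orthonormal 𝕜 v) : Countable ι := by
  refine Pairwise.countable_of_isOpen_disjoint (s := fun i => Metric.ball (v i) (1 / 2))
    (fun i j hij => Metric.ball_disjoint_ball ?_) (fun _ => Metric.isOpen_ball)
    (fun _ => Metric.nonempty_ball.2 (by norm_num))
  have hsq : ‖v i - v j‖ ^ 2 = 2 := by
    rw [@norm_sub_sq 𝕜, hv.2 hij, hv.1 i, hv.1 j]
    norm_num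
  rw [dist_eq_norm]
  nlinarith [norm_nonneg (v i - v j)]

lemma HilbertBasis.hasSum_inner_smul {ι : Type*} (b : HilbertBasis ι 𝕜 E) (x : E) :
    HasSum (fun i => ⟪x, b i⟫_𝕜 • b i) (b.repr.symm (star (b.repr x))) := by
  convert b.hasSum_repr (b.repr.symm (star (b.repr x))) using 2 with i
  rw [LinearIsometryEquiv.apply_symm_apply, lp.star_apply, b.repr_apply_apply, RCLike.star_def,
    inner_conj_symm]

/-- The map `x ↦ ∑ₙ ⟪x, eₙ⟫ eₙ` is conjugation with respect to a Hilbert basis, extended by zero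
from a countable index set to `ℕ`. -/
lemma exists_bijective_hasSum_inner_smul [CompleteSpace E] [TopologicalSpace.SeparableSpace E] :
    ∃ (e : ℕ → E) (C : E → E), Function.Bijective C ∧
      ∀ x, HasSum (fun n => ⟪x, e n⟫_𝕜 • e n) (C x) := by
  obtain ⟨w, b, -⟩ := exists_hilbertBasis 𝕜 E
  have := b.orthonormal.countable
  obtain ⟨ι, hι⟩ := Countable.exists_injective_nat w
  refine ⟨Function.extend ι b 0, fun x => b.repr.symm (star (b.repr x)),
    b.repr.symm.bijective.comp (star_involutive.bijective.comp b.repr.bijective), fun x => ?_⟩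
  rw [← hι.hasSum_iff]
  · simpa [Function.comp_def, hι.extend_apply] using b.hasSum_inner_smul x
  · intro n hn
    simp [Function.extend_apply' _ _ _ hn]

end HilbertBasis

theorem stmt16_general {H : Type*} [NormedAddCommGroup H] [InnerProductSpace ℂ H] [CompleteSpace H]
    [TopologicalSpace.SeparableSpace H]
    (hM2 : ∀ (Φ Ψ : ℕ → H) (m : ℕ → ℂ) (M : H → H),
      (∀ f : H, HasSum (fun n => (m n * (inner ℂ f (Ψ n) : ℂ)) • Φ n) (M f)) →
      Function.Bijective M →
      ∃ α β : ℕ → ℂ, (∀ n, α n * (starRingEnd ℂ) (β n) = m n) ∧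
        (∃ A B : ℝ, 0 < A ∧ 0 < B ∧ ∀ x : H,
          ENNReal.ofReal A * (‖x‖₊ : ℝ≥0∞) ^ 2 ≤ bSum (fun n => α n • Φ n) x ∧
          bSum (fun n => α n • Φ n) x ≤ ENNReal.ofReal B * (‖x‖₊ : ℝ≥0∞) ^ 2) ∧
        (∃ A B : ℝ, 0 < A ∧ 0 < B ∧ ∀ x : H,
          ENNReal.ofReal A * (‖x‖₊ : ℝ≥0∞) ^ 2 ≤ bSum (fun n => β n • Ψ n) x ∧
          bSum (fun n => β n • Ψ n) x ≤ ENNReal.ofReal B * (‖x‖₊ : ℝ≥0∞) ^ 2)) :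
    ∀ (Φ Ψ : ℕ → H) (m : ℕ → ℂ),
      (∀ f : H, ∃ y : H, HasSum (fun n => (m n * (inner ℂ f (Ψ n) : ℂ)) • Φ n) y) →
      ∃ α β : ℕ → ℂ, (∀ n, α n * (starRingEnd ℂ) (β n) = m n) ∧
        (∃ B : ℝ, 0 < B ∧ ∀ x : H,
          bSum (fun n => α n • Φ n) x ≤ ENNReal.ofReal B * (‖x‖₊ : ℝ≥0∞) ^ 2) ∧
        (∃ B : ℝ, 0 < B ∧ ∀ x : H,
          bSum (fun n => β n • Ψ n) x ≤ ENNReal.ofReal B * (‖x‖₊ : ℝ≥0∞) ^ 2) := by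
  intro Φ Ψ m hconv
  choose M hM using hconv
  obtain ⟨e, C, hC, he⟩ := exists_bijective_hasSum_inner_smul (𝕜 := ℂ) (E := H)
  have hsum : ∀ f, HasSum (multiplierTerm (interleave 1 (interleave m (-m)))
      (interleave e (interleave Φ Φ)) (interleave e (interleave Ψ Ψ)) f) (C f) := fun f =>
    hasSum_multiplierTerm_interleave_neg (by rw [multiplierTerm_one]; exact he f) (hM f)
  obtain ⟨α, β, hαβ, ⟨_, B₁, _, hB₁, hα⟩, ⟨_, B₂, _, hB₂, hβ⟩⟩ := hM2 _ _ _ C hsum hC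
  -- the original multiplier sits at the indices `4k + 1`
  have hι : Function.Injective fun k : ℕ => 2 * (2 * k) + 1 := fun a b h => by
    simp only at h
    omega
  refine ⟨fun k => α (2 * (2 * k) + 1), fun k => β (2 * (2 * k) + 1),
    fun k => by simpa using hαβ (2 * (2 * k) + 1), ⟨B₁, hB₁, fun x => ?_⟩, ⟨B₂, hB₂, fun x => ?_⟩⟩
  · simpa using (bSum_comp_le _ x hι).trans (hα x).2
  · simpa using (bSum_comp_le _ x hι).trans (hβ x).2

/-- Conjecture (M2) implies Conjecture (M1). -/
theorem stmt16 {H : Type*} [NormedAddCommGroup H] [InnerProductSpace ℂ H] [CompleteSpace H]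
    [TopologicalSpace.SeparableSpace H] (hinf : ¬ FiniteDimensional ℂ H)
    (hM2 : ∀ (Φ Ψ : ℕ → H) (m : ℕ → ℂ) (M : H → H),
      (∀ f : H, HasSum (fun n => (m n * (inner ℂ f (Ψ n) : ℂ)) • Φ n) (M f)) →
      Function.Bijective M →
      ∃ α β : ℕ → ℂ, (∀ n, α n * (starRingEnd ℂ) (β n) = m n) ∧
        (∃ A B : ℝ, 0 < A ∧ 0 < B ∧ ∀ x : H,
          ENNReal.ofReal A * (‖x‖₊ : ℝ≥0∞) ^ 2 ≤ bSum (fun n => α n • Φ n) x ∧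
          bSum (fun n => α n • Φ n) x ≤ ENNReal.ofReal B * (‖x‖₊ : ℝ≥0∞) ^ 2) ∧
        (∃ A B : ℝ, 0 < A ∧ 0 < B ∧ ∀ x : H,
          ENNReal.ofReal A * (‖x‖₊ : ℝ≥0∞) ^ 2 ≤ bSum (fun n => β n • Ψ n) x ∧
          bSum (fun n => β n • Ψ n) x ≤ ENNReal.ofReal B * (‖x‖₊ : ℝ≥0∞) ^ 2)) :
    ∀ (Φ Ψ : ℕ → H) (m : ℕ → ℂ),
      (∀ f : H, ∃ y : H, HasSum (fun n => (m n * (inner ℂ f (Ψ n) : ℂ)) • Φ n) y) →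
      ∃ α β : ℕ → ℂ, (∀ n, α n * (starRingEnd ℂ) (β n) = m n) ∧
        (∃ B : ℝ, 0 < B ∧ ∀ x : H,
          bSum (fun n => α n • Φ n) x ≤ ENNReal.ofReal B * (‖x‖₊ : ℝ≥0∞) ^ 2) ∧
        (∃ B : ℝ, 0 < B ∧ ∀ x : H,
          bSum (fun n => β n • Ψ n) x ≤ ENNReal.ofReal B * (‖x‖₊ : ℝ≥0∞) ^ 2) :=
  stmt16_general hM2
end

section
/- Let (f_n) be a sequence in H, W the closure of the domain of its analysis operator, P_W the orthogonal projection onto W, and J : W → H a unitary. If there are weights ω_n > 1 such that (ω_n J P_W f_n) is a lower semi frame for H with bound A, then (ω_n f_n) is a lower semi frame for H with bound A. -/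
open scoped ENNReal NNReal

section BesselSum

variable {E E' : Type*} [NormedAddCommGroup E] [InnerProductSpace ℂ E]
  [NormedAddCommGroup E'] [InnerProductSpace ℂ E']

theorem bSum_congr_of_inner_eq {g : ℕ → E} {g' : ℕ → E'} {f : E} {f' : E'}
    (h : ∀ n, inner ℂ f (g n) = inner ℂ f' (g' n)) : bSum g f = bSum g' f' :=
  tsum_congr fun n => by rw [h n]

theorem bSum_le_bSum_smul (g : ℕ → E) (f : E) {c : ℕ → ℂ} (hc : ∀ n, 1 ≤ ‖c n‖) :
    bSum g f ≤ bSum (fun n => c n • g n) f := by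
  refine ENNReal.tsum_le_tsum fun n => ?_
  rw [inner_smul_right, nnnorm_mul]
  gcongr
  exact le_mul_of_one_le_left zero_le (hc n)

end BesselSum

theorem inner_eq_inner_of_sub_mem_orthogonal {E : Type*} [NormedAddCommGroup E]
    [InnerProductSpace ℂ E] {K : Submodule ℂ E} {f x y : E} (hf : f ∈ K) (hxy : x - y ∈ Kᗮ) :
    inner ℂ f x = inner ℂ f y := by
  rw [← sub_eq_zero, ← inner_sub_right]
  exact Submodule.inner_right_of_mem_orthogonal hf hxy

theorem stmt18_general {H : Type*} [NormedAddCommGroup H] [InnerProductSpace ℂ H]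
    (F : ℕ → H) (W : Submodule ℂ H)
    (hW : (W : Set H) = closure {f : H | bSum F f ≠ ⊤})
    (P : H →ₗ[ℂ] H) (hPmem : ∀ x : H, P x ∈ W)
    (hPorth : ∀ x : H, x - P x ∈ Wᗮ)
    (J : W ≃ₗᵢ[ℂ] H)
    (ω : ℕ → ℝ) (hω : ∀ n, 1 < ω n) (A : ℝ)
    (hlow : ∀ f : H, ENNReal.ofReal A * (‖f‖₊ : ℝ≥0∞) ^ 2
      ≤ bSum (fun n => ((ω n : ℝ) : ℂ) • J ⟨P (F n), hPmem (F n)⟩) f) :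
    ∀ f : H, ENNReal.ofReal A * (‖f‖₊ : ℝ≥0∞) ^ 2
      ≤ bSum (fun n => ((ω n : ℝ) : ℂ) • F n) f := by
  intro f
  by_cases hS : bSum (fun n => ((ω n : ℝ) : ℂ) • F n) f = ⊤
  · exact hS ▸ le_top
  have hω' : ∀ n, 1 ≤ ‖((ω n : ℝ) : ℂ)‖ := fun n => by
    rw [Complex.norm_real, Real.norm_of_nonneg (zero_le_one.trans (hω n).le)]
    exact (hω n).le
  have hfW : f ∈ W := by
    have hfin : bSum F f ≠ ⊤ := ne_top_of_le_ne_top hS (bSum_le_bSum_smul F f hω')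
    exact (hW ▸ subset_closure hfin : f ∈ (W : Set H))
  have hsum : bSum (fun n => ((ω n : ℝ) : ℂ) • J ⟨P (F n), hPmem (F n)⟩) (J ⟨f, hfW⟩)
      = bSum (fun n => ((ω n : ℝ) : ℂ) • F n) f :=
    bSum_congr_of_inner_eq fun n => by
      rw [inner_smul_right, inner_smul_right, LinearIsometryEquiv.inner_map_map,
        Submodule.coe_inner, inner_eq_inner_of_sub_mem_orthogonal hfW (hPorth (F n))]
  calc ENNReal.ofReal A * (‖f‖₊ : ℝ≥0∞) ^ 2
      = ENNReal.ofReal A * (‖J ⟨f, hfW⟩‖₊ : ℝ≥0∞) ^ 2 := by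
        rw [LinearIsometryEquiv.nnnorm_map]; rfl
    _ ≤ _ := hlow _
    _ = _ := hsum

theorem stmt18 {H : Type*} [NormedAddCommGroup H] [InnerProductSpace ℂ H] [CompleteSpace H]
    [TopologicalSpace.SeparableSpace H] (hinf : ¬ FiniteDimensional ℂ H)
    (F : ℕ → H) (W : Submodule ℂ H)
    (hW : (W : Set H) = closure {f : H | bSum F f ≠ ⊤})
    (P : H →ₗ[ℂ] H) (hPmem : ∀ x : H, P x ∈ W) (hPid : ∀ x ∈ W, P x = x)
    (hPorth : ∀ x : H, x - P x ∈ Wᗮ)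
    (J : W ≃ₗᵢ[ℂ] H)
    (ω : ℕ → ℝ) (hω : ∀ n, 1 < ω n) (A : ℝ) (hA : 0 < A)
    (hlow : ∀ f : H, ENNReal.ofReal A * (‖f‖₊ : ℝ≥0∞) ^ 2
      ≤ bSum (fun n => ((ω n : ℝ) : ℂ) • J ⟨P (F n), hPmem (F n)⟩) f) :
    ∀ f : H, ENNReal.ofReal A * (‖f‖₊ : ℝ≥0∞) ^ 2
      ≤ bSum (fun n => ((ω n : ℝ) : ℂ) • F n) f :=
  stmt18_general F W hW P hPmem hPorth J ω hω A hlow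
end
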